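/- arXiv:1804.09927 — 2 statements merged into one kernel-verified Lean document; each statement's English description precedes it below -/
import Mathlib

section
/- Let a ≤ 0 and h > 0, set z = a h, and assume z satisfies the coefficient inequality e^z φ_1(z) + (3/2) e^z φ_2(z) − 2 φ_2(z) + e^z φ_3(z) − 2 φ_3(z) ≥ 0 (which holds whenever h ≤ β₃/|a| for a constant β₃ ≈ 0.331). Let b : ℝ × ℝ → ℝ be a nonnegative function, t_n = n h, and let (y_n)_{n ≥ 0} satisfy, for n ≥ 2, the EAB₃ recursion y_{n+1} = e^{a h} y_n + h ( φ_1(a h) γ_{n1} + φ_2(a h) γ_{n2} + φ_3(a h) γ_{n3} ), where b_j = b(t_j, y_j), γ_{n1} = b_n, γ_{n2} = (3/2) b_n − 2 b_{n−1} + (1/2) b_{n−2}, γ_{n3} = b_n − 2 b_{n−1} + b_{n−2}. If moreover e^{a h} y_2 − 2 h ( φ_2(a h) + φ_3(a h) ) b_1 ≥ 0, then y_n ≥ 0 for all n ≥ 3. -/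
/-- The exponential propagation functions φ_j: φ_0(z) = e^z,
φ_{j+1}(z) = (φ_j(z) - 1/j!)/z for z ≠ 0, and φ_j(0) = 1/j!. -/
noncomputable def phi : ℕ → ℝ → ℝ
  | 0, z => Real.exp z
  | j + 1, z =>
      if z = 0 then 1 / (Nat.factorial (j + 1)) else (phi j z - 1 / (Nat.factorial j)) / z

lemma exp_le_quad {z : ℝ} (hz : z ≤ 0) : Real.exp z ≤ 1 + z + z ^ 2 / 2 := by
  set f : ℝ → ℝ := fun x => 1 + x + x ^ 2 / 2 - Real.exp x with hf
  have hderiv : ∀ x : ℝ, HasDerivAt f (1 + x - Real.exp x) x := by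
    intro x
    have h1 : HasDerivAt (fun x : ℝ => 1 + x + x ^ 2 / 2 - Real.exp x)
        (0 + 1 + (2 * x ^ 1) / 2 - Real.exp x) x := by
      exact (((hasDerivAt_const x (1:ℝ)).add (hasDerivAt_id x)).add
        ((hasDerivAt_pow 2 x).div_const 2)).sub (Real.hasDerivAt_exp x)
    convert h1 using 1; ring
  have hanti : Antitone f := by
    refine antitone_of_deriv_nonpos (fun x => (hderiv x).differentiableAt) (fun x => ?_)
    rw [(hderiv x).deriv]
    nlinarith [Real.add_one_le_exp x]
  have := hanti hz
  simp only [hf] at this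
  simp at this
  nlinarith [this]

lemma phi1_nonneg {z : ℝ} (hz : z ≤ 0) : 0 ≤ phi 1 z := by
  rcases lt_or_eq_of_le hz with h | h
  · have hne : z ≠ 0 := h.ne
    have h1 : phi 1 z = (Real.exp z - 1) / z := by simp [phi, hne]
    rw [h1, div_nonneg_iff]
    right
    constructor
    · nlinarith [Real.exp_le_one_iff.mpr hz]
    · exact h.le
  · subst h; norm_num [phi]

lemma phi2_eq {z : ℝ} (hne : z ≠ 0) : phi 2 z = (Real.exp z - 1 - z) / z ^ 2 := by
  have h1 : phi 1 z = (Real.exp z - 1) / z := by simp [phi, hne]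
  simp only [phi, if_neg hne, h1]
  rw [div_eq_div_iff hne (pow_ne_zero 2 hne)]
  field_simp
  ring

lemma phi3_eq {z : ℝ} (hne : z ≠ 0) :
    phi 3 z = (Real.exp z - 1 - z - z ^ 2 / 2) / z ^ 3 := by
  have h2 := phi2_eq hne
  have h3 : phi 3 z = (phi 2 z - 1 / 2) / z := by
    rw [phi, if_neg hne]; norm_num [Nat.factorial]
  rw [h3, h2, div_eq_div_iff hne (pow_ne_zero 3 hne)]
  have h2ne : (z:ℝ) ^ 2 ≠ 0 := pow_ne_zero 2 hne
  field_simp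

lemma phi2_nonneg {z : ℝ} (hz : z ≤ 0) : 0 ≤ phi 2 z := by
  rcases lt_or_eq_of_le hz with h | h
  · rw [phi2_eq h.ne]
    apply div_nonneg _ (sq_nonneg z)
    nlinarith [Real.add_one_le_exp z]
  · subst h; norm_num [phi]

lemma phi3_nonneg {z : ℝ} (hz : z ≤ 0) : 0 ≤ phi 3 z := by
  rcases lt_or_eq_of_le hz with h | h
  · rw [phi3_eq h.ne, div_nonneg_iff]
    right
    constructor
    · nlinarith [exp_le_quad hz]
    · nlinarith [sq_nonneg z]
  · subst h; norm_num [phi]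

/-- Positivity of the EAB₃ scheme for y' = a y + b(t,y) with
a ≤ 0, b ≥ 0, under the coefficient inequality on z = a h and a condition on
the initial data. -/
theorem eab3_positivity (a h : ℝ) (ha : a ≤ 0) (hh : 0 < h)
    (hcoef : 0 ≤ Real.exp (a * h) * phi 1 (a * h)
        + (3 / 2) * Real.exp (a * h) * phi 2 (a * h) - 2 * phi 2 (a * h)
        + Real.exp (a * h) * phi 3 (a * h) - 2 * phi 3 (a * h))
    (b : ℝ → ℝ → ℝ) (hb : ∀ t y, 0 ≤ b t y)
    (y : ℕ → ℝ)
    (hrec : ∀ n, 2 ≤ n →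
      y (n + 1) = Real.exp (a * h) * y n
        + h * (phi 1 (a * h) * b ((n : ℝ) * h) (y n)
             + phi 2 (a * h) * ((3 / 2) * b ((n : ℝ) * h) (y n)
                 - 2 * b (((n - 1 : ℕ) : ℝ) * h) (y (n - 1))
                 + (1 / 2) * b (((n - 2 : ℕ) : ℝ) * h) (y (n - 2)))
             + phi 3 (a * h) * (b ((n : ℝ) * h) (y n)
                 - 2 * b (((n - 1 : ℕ) : ℝ) * h) (y (n - 1))
                 + b (((n - 2 : ℕ) : ℝ) * h) (y (n - 2)))))
    (hinit : 0 ≤ Real.exp (a * h) * y 2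
        - 2 * h * (phi 2 (a * h) + phi 3 (a * h)) * b ((1 : ℝ) * h) (y 1)) :
    ∀ n, 3 ≤ n → 0 ≤ y n := by
  set z := a * h with hz
  have hzle : z ≤ 0 := mul_nonpos_of_nonpos_of_nonneg ha hh.le
  set E := Real.exp z with hE
  have hEpos : 0 < E := Real.exp_pos z
  have hp1 := phi1_nonneg hzle
  have hp2 := phi2_nonneg hzle
  have hp3 := phi3_nonneg hzle
  -- the key invariant
  have claim : ∀ m, 2 ≤ m →
      0 ≤ E * y m - 2 * h * (phi 2 z + phi 3 z) * b (((m - 1 : ℕ) : ℝ) * h) (y (m - 1)) := by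
    intro m hm
    induction m, hm using Nat.le_induction with
    | base =>
      simpa using hinit
    | succ m hm ih =>
      have hb0 := hb ((m : ℝ) * h) (y m)
      have hb2 := hb (((m - 2 : ℕ) : ℝ) * h) (y (m - 2))
      have key : E * y (m + 1) - 2 * h * (phi 2 z + phi 3 z) * b ((m : ℝ) * h) (y m)
          = E * (E * y m - 2 * h * (phi 2 z + phi 3 z) * b (((m - 1 : ℕ) : ℝ) * h) (y (m - 1)))
            + h * b ((m : ℝ) * h) (y m)
              * (E * phi 1 z + (3 / 2) * E * phi 2 z - 2 * phi 2 z + E * phi 3 z - 2 * phi 3 z)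
            + h * E * ((1 / 2) * phi 2 z + phi 3 z) * b (((m - 2 : ℕ) : ℝ) * h) (y (m - 2)) := by
        rw [hrec m hm]
        ring
      have hsimp : (m + 1 - 1 : ℕ) = m := by omega
      rw [hsimp]
      rw [key]
      have t1 : 0 ≤ E * (E * y m - 2 * h * (phi 2 z + phi 3 z)
          * b (((m - 1 : ℕ) : ℝ) * h) (y (m - 1))) := mul_nonneg hEpos.le ih
      have t2 : 0 ≤ h * b ((m : ℝ) * h) (y m)
          * (E * phi 1 z + (3 / 2) * E * phi 2 z - 2 * phi 2 z + E * phi 3 z - 2 * phi 3 z) :=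
        mul_nonneg (mul_nonneg hh.le hb0) hcoef
      have t3 : 0 ≤ h * E * ((1 / 2) * phi 2 z + phi 3 z)
          * b (((m - 2 : ℕ) : ℝ) * h) (y (m - 2)) := by positivity
      linarith
  intro n hn
  obtain ⟨m, rfl⟩ : ∃ m, n = m + 1 := ⟨n - 1, by omega⟩
  have hm : 2 ≤ m := by omega
  have hcl := claim m hm
  have hb0 := hb ((m : ℝ) * h) (y m)
  have hb2 := hb (((m - 2 : ℕ) : ℝ) * h) (y (m - 2))
  rw [hrec m hm]
  have hkey : E * y m + h * (phi 1 z * b ((m : ℝ) * h) (y m)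
      + phi 2 z * ((3 / 2) * b ((m : ℝ) * h) (y m)
          - 2 * b (((m - 1 : ℕ) : ℝ) * h) (y (m - 1))
          + (1 / 2) * b (((m - 2 : ℕ) : ℝ) * h) (y (m - 2)))
      + phi 3 z * (b ((m : ℝ) * h) (y m)
          - 2 * b (((m - 1 : ℕ) : ℝ) * h) (y (m - 1))
          + b (((m - 2 : ℕ) : ℝ) * h) (y (m - 2))))
      = (E * y m - 2 * h * (phi 2 z + phi 3 z) * b (((m - 1 : ℕ) : ℝ) * h) (y (m - 1)))
        + h * (phi 1 z + (3 / 2) * phi 2 z + phi 3 z) * b ((m : ℝ) * h) (y m)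
        + h * ((1 / 2) * phi 2 z + phi 3 z) * b (((m - 2 : ℕ) : ℝ) * h) (y (m - 2)) := by
    ring
  rw [hkey]
  have t2 : 0 ≤ h * (phi 1 z + (3 / 2) * phi 2 z + phi 3 z) * b ((m : ℝ) * h) (y m) := by
    positivity
  have t3 : 0 ≤ h * ((1 / 2) * phi 2 z + phi 3 z) * b (((m - 2 : ℕ) : ℝ) * h) (y (m - 2)) := by
    positivity
  linarith
end

section
/- Let a ≤ 0, K₁ ≤ K₂, and let b : ℝ × ℝ → ℝ satisfy −a K₁ ≤ b(t, y) ≤ −a K₂ for all (t, y). Let h > 0 with h ≤ 1/|a| (no restriction if a = 0), t_n = n h, and let (y_n)_{n ≥ 0} satisfy, for n ≥ 1, the EAB₂ recursion y_{n+1} = e^{a h} y_n + h ( φ_1(a h) b_n + φ_2(a h)(b_n − b_{n−1}) ) with b_j = b(t_j, y_j). Set C_p = e^{a h} + a h φ_2(a h). If C_p K₁ ≤ e^{a h} y_1 − h φ_2(a h) b_0 ≤ C_p K₂, then K₁ ≤ y_n ≤ K₂ for all n ≥ 2. -/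
/-!
With `z = a h`, `E = e^z` and `C = E + z φ₂(z)` (the paper's `C_p`), the quantity `uₙ = E yₙ₊₁ - h φ₂(z) bₙ` satisfies
`uₙ₊₁ = E uₙ + h (E (φ₁(z) + φ₂(z)) - φ₂(z)) bₙ₊₁` and `yₙ₊₂ = uₙ + h (φ₁(z) + φ₂(z)) bₙ₊₁`.
All coefficients are nonnegative once `-1 ≤ z` (the last one because
`z² (E (φ₁ + φ₂) - φ₂) = (z + 1) (E - 1)²`), and `E = 1 + z φ₁(z)` makes both right-hand sides
combinations whose weights, with `bₙ₊₁` counted as `-a` times a point of `[K₁, K₂]`, add up to `C`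
and to `1` respectively. Hence `uₙ ∈ [C K₁, C K₂]` propagates from `u₀`, and then `yₙ₊₂ ∈ [K₁, K₂]`.
-/

open Real Set

lemma phi_zero_right (j : ℕ) : phi j 0 = 1 / j.factorial := by
  cases j <;> simp [phi]

lemma phi_eq_inv_factorial_add_mul_phi_succ (j : ℕ) (z : ℝ) :
    phi j z = 1 / j.factorial + z * phi (j + 1) z := by
  by_cases hz : z = 0
  · simp [hz, phi_zero_right]
  · rw [phi, if_neg hz]
    field_simp
    ring

lemma exp_eq_one_add_mul_phi_one (z : ℝ) : exp z = 1 + z * phi 1 z := by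
  simpa [phi] using phi_eq_inv_factorial_add_mul_phi_succ 0 z

lemma phi_one_eq_one_add_mul_phi_two (z : ℝ) : phi 1 z = 1 + z * phi 2 z := by
  simpa using phi_eq_inv_factorial_add_mul_phi_succ 1 z

lemma phi_one_nonneg (z : ℝ) : 0 ≤ phi 1 z := by
  rcases eq_or_ne z 0 with rfl | hz
  · simp [phi_zero_right]
  have hzphi : z * phi 1 z = exp z - 1 := by linarith [exp_eq_one_add_mul_phi_one z]
  refine nonneg_of_mul_nonneg_right ?_ (pow_pos (abs_pos.mpr hz) 2)
  rw [sq_abs, sq, mul_assoc, hzphi]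
  rcases le_total 0 z with hz0 | hz0
  · exact mul_nonneg hz0 (sub_nonneg.mpr (one_le_exp hz0))
  · exact mul_nonneg_of_nonpos_of_nonpos hz0 (sub_nonpos.mpr (exp_le_one_iff.mpr hz0))

lemma sq_mul_phi_two (z : ℝ) : z ^ 2 * phi 2 z = exp z - 1 - z := by
  linear_combination -z * phi_one_eq_one_add_mul_phi_two z - exp_eq_one_add_mul_phi_one z

lemma phi_two_nonneg (z : ℝ) : 0 ≤ phi 2 z := by
  rcases eq_or_ne z 0 with rfl | hz
  · simp [phi_zero_right]
  refine nonneg_of_mul_nonneg_right ?_ (pow_pos (abs_pos.mpr hz) 2)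
  rw [sq_abs, sq_mul_phi_two]
  linarith [add_one_le_exp z]

lemma phi_two_le_exp_mul_phi_one_add_phi_two {z : ℝ} (hz : -1 ≤ z) :
    phi 2 z ≤ exp z * (phi 1 z + phi 2 z) := by
  rw [← sub_nonneg]
  rcases eq_or_ne z 0 with rfl | hz0
  · norm_num [phi_zero_right]
  have key : z ^ 2 * (exp z * (phi 1 z + phi 2 z) - phi 2 z) = (z + 1) * (exp z - 1) ^ 2 := by
    linear_combination (exp z * z) * (exp_eq_one_add_mul_phi_one z).symm
      + (exp z - 1) * sq_mul_phi_two z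
  refine nonneg_of_mul_nonneg_right ?_ (pow_pos (abs_pos.mpr hz0) 2)
  rw [sq_abs, key]
  exact mul_nonneg (by linarith) (sq_nonneg _)

lemma neg_one_le_mul_of_le_one_div_abs {a h : ℝ} (hh : 0 ≤ h) (hstep : a ≠ 0 → h ≤ 1 / |a|) :
    -1 ≤ a * h := by
  rcases eq_or_ne a 0 with rfl | ha
  · simp
  have habs : |a| * h ≤ 1 := by
    rw [← le_div_iff₀' (abs_pos.mpr ha)]
    exact hstep ha
  nlinarith [neg_abs_le a]

lemma mul_add_mul_mem_Icc {c d α β γ u v K₁ K₂ : ℝ} (hc : 0 ≤ c) (hd : 0 ≤ d)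
    (hγ : c * α + d * β = γ) (hu : u ∈ Icc (α * K₁) (α * K₂)) (hv : v ∈ Icc (β * K₁) (β * K₂)) :
    c * u + d * v ∈ Icc (γ * K₁) (γ * K₂) := by
  subst hγ
  constructor
  · nlinarith [mul_le_mul_of_nonneg_left hu.1 hc, mul_le_mul_of_nonneg_left hv.1 hd]
  · nlinarith [mul_le_mul_of_nonneg_left hu.2 hc, mul_le_mul_of_nonneg_left hv.2 hd]

noncomputable def eab2Cp (z : ℝ) : ℝ := exp z + z * phi 2 z

section EAB2

variable {a h K₁ K₂ : ℝ} {y β : ℕ → ℝ}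

lemma eab2_predictor_mem_Icc (hh : 0 ≤ h) (hz : -1 ≤ a * h)
    (hβ : ∀ n, β n ∈ Icc (-a * K₁) (-a * K₂))
    (hrec : ∀ n, y (n + 2) = exp (a * h) * y (n + 1)
      + h * (phi 1 (a * h) * β (n + 1) + phi 2 (a * h) * (β (n + 1) - β n)))
    (hinit : exp (a * h) * y 1 - h * phi 2 (a * h) * β 0
      ∈ Icc (eab2Cp (a * h) * K₁) (eab2Cp (a * h) * K₂)) (n : ℕ) :
    exp (a * h) * y (n + 1) - h * phi 2 (a * h) * β n
      ∈ Icc (eab2Cp (a * h) * K₁) (eab2Cp (a * h) * K₂) := by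
  induction n with
  | zero => exact hinit
  | succ n ih =>
    have hstep : exp (a * h) * y (n + 2) - h * phi 2 (a * h) * β (n + 1)
        = exp (a * h) * (exp (a * h) * y (n + 1) - h * phi 2 (a * h) * β n)
          + h * (exp (a * h) * (phi 1 (a * h) + phi 2 (a * h)) - phi 2 (a * h)) * β (n + 1) := by
      linear_combination exp (a * h) * hrec n
    rw [hstep]
    refine mul_add_mul_mem_Icc (exp_pos _).le
      (mul_nonneg hh (sub_nonneg.mpr (phi_two_le_exp_mul_phi_one_add_phi_two hz))) ?_ ih (hβ _)
    rw [eab2Cp]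
    linear_combination exp (a * h) * exp_eq_one_add_mul_phi_one (a * h)

theorem eab2_mem_Icc (hh : 0 ≤ h) (hz : -1 ≤ a * h)
    (hβ : ∀ n, β n ∈ Icc (-a * K₁) (-a * K₂))
    (hrec : ∀ n, y (n + 2) = exp (a * h) * y (n + 1)
      + h * (phi 1 (a * h) * β (n + 1) + phi 2 (a * h) * (β (n + 1) - β n)))
    (hinit : exp (a * h) * y 1 - h * phi 2 (a * h) * β 0
      ∈ Icc (eab2Cp (a * h) * K₁) (eab2Cp (a * h) * K₂)) (n : ℕ) :
    y (n + 2) ∈ Icc K₁ K₂ := by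
  have hsplit : y (n + 2) = 1 * (exp (a * h) * y (n + 1) - h * phi 2 (a * h) * β n)
      + h * (phi 1 (a * h) + phi 2 (a * h)) * β (n + 1) := by
    linear_combination hrec n
  rw [hsplit, ← one_mul K₁, ← one_mul K₂]
  refine mul_add_mul_mem_Icc zero_le_one
    (mul_nonneg hh (add_nonneg (phi_one_nonneg _) (phi_two_nonneg _))) ?_
    (eab2_predictor_mem_Icc hh hz hβ hrec hinit n) (hβ (n + 1))
  rw [eab2Cp]
  linear_combination exp_eq_one_add_mul_phi_one (a * h)

end EAB2

theorem eab2_invariant_region_general (a h K₁ K₂ : ℝ)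
    (hh : 0 < h) (hstep : a ≠ 0 → h ≤ 1 / |a|)
    (b : ℝ → ℝ → ℝ) (hb : ∀ t y, -a * K₁ ≤ b t y ∧ b t y ≤ -a * K₂)
    (y : ℕ → ℝ)
    (hrec : ∀ n, 1 ≤ n →
      y (n + 1) = Real.exp (a * h) * y n
        + h * (phi 1 (a * h) * b ((n : ℝ) * h) (y n)
             + phi 2 (a * h) * (b ((n : ℝ) * h) (y n)
                 - b (((n - 1 : ℕ) : ℝ) * h) (y (n - 1)))))
    (hinit₁ : (Real.exp (a * h) + a * h * phi 2 (a * h)) * K₁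
        ≤ Real.exp (a * h) * y 1 - h * phi 2 (a * h) * b 0 (y 0))
    (hinit₂ : Real.exp (a * h) * y 1 - h * phi 2 (a * h) * b 0 (y 0)
        ≤ (Real.exp (a * h) + a * h * phi 2 (a * h)) * K₂) :
    ∀ n, 2 ≤ n → K₁ ≤ y n ∧ y n ≤ K₂ := by
  intro n hn
  obtain ⟨m, rfl⟩ : ∃ m, n = m + 2 := ⟨n - 2, by omega⟩
  refine eab2_mem_Icc (β := fun k ↦ b (k * h) (y k)) hh.le
    (neg_one_le_mul_of_le_one_div_abs hh.le hstep) (fun k ↦ hb _ _) (fun k ↦ ?_) ?_ m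
  · simpa using hrec (k + 1) (Nat.le_add_left 1 k)
  · simpa [eab2Cp] using And.intro hinit₁ hinit₂

/-- Preservation of the invariant region [K₁, K₂] by the EAB₂
scheme for y' = a y + b(t,y) with a ≤ 0 and −aK₁ ≤ b ≤ −aK₂, under the step
restriction h ≤ 1/|a| and a condition on the initial data. -/
theorem eab2_invariant_region (a h K₁ K₂ : ℝ) (ha : a ≤ 0) (hK : K₁ ≤ K₂)
    (hh : 0 < h) (hstep : a ≠ 0 → h ≤ 1 / |a|)
    (b : ℝ → ℝ → ℝ) (hb : ∀ t y, -a * K₁ ≤ b t y ∧ b t y ≤ -a * K₂)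
    (y : ℕ → ℝ)
    (hrec : ∀ n, 1 ≤ n →
      y (n + 1) = Real.exp (a * h) * y n
        + h * (phi 1 (a * h) * b ((n : ℝ) * h) (y n)
             + phi 2 (a * h) * (b ((n : ℝ) * h) (y n)
                 - b (((n - 1 : ℕ) : ℝ) * h) (y (n - 1)))))
    (hinit₁ : (Real.exp (a * h) + a * h * phi 2 (a * h)) * K₁
        ≤ Real.exp (a * h) * y 1 - h * phi 2 (a * h) * b 0 (y 0))
    (hinit₂ : Real.exp (a * h) * y 1 - h * phi 2 (a * h) * b 0 (y 0)
        ≤ (Real.exp (a * h) + a * h * phi 2 (a * h)) * K₂) :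
    ∀ n, 2 ≤ n → K₁ ≤ y n ∧ y n ≤ K₂ :=
  eab2_invariant_region_general a h K₁ K₂ hh hstep b hb y hrec hinit₁ hinit₂
end
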